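/- arXiv:2605.18785 — 5 statements merged into one kernel-verified Lean document; each statement's English description precedes it below -/
import Mathlib

section
/- Let A : ℝⁿ → Matrix (Fin n) (Fin n) ℝ be a bounded, locally Lipschitz matrix-valued function such that for each i, if hᵢ ≤ 0 then A(h)ᵢⱼ ≥ 0 for all j. If h : ℝ → ℝⁿ solves dhᵢ/dt = (∑ⱼ A(h)ᵢⱼ)/Sᵢ with Sᵢ > 0 and h(0) ≥ 0 componentwise, then h(t) ≥ 0 componentwise for all t ≥ 0. -/
open Matrix

/-- Scalar barrier lemma: if `f 0 ≥ 0` and the derivative is nonnegative whenever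
`f s ≤ 0`, then `f` stays nonnegative for `t ≥ 0`. -/
lemma nonneg_of_deriv_nonneg_on_nonpos (f g : ℝ → ℝ)
    (hf : ∀ s, HasDerivAt f (g s) s)
    (hg : ∀ s, f s ≤ 0 → 0 ≤ g s)
    (h0 : 0 ≤ f 0) : ∀ t : ℝ, 0 ≤ t → 0 ≤ f t := by
  intro t ht
  by_contra hneg
  push_neg at hneg
  have hdiff : Differentiable ℝ f := fun s => (hf s).differentiableAt
  have hcont : Continuous f := hdiff.continuous
  set K : Set ℝ := Set.Icc 0 t ∩ f ⁻¹' Set.Ici 0 with hK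
  have hKne : K.Nonempty := ⟨0, ⟨le_refl 0, ht⟩, h0⟩
  have hKbdd : BddAbove K := ⟨t, fun s hs => hs.1.2⟩
  have hKclosed : IsClosed K :=
    (isClosed_Icc).inter (isClosed_Ici.preimage hcont)
  set s0 := sSup K with hs0
  have hs0mem : s0 ∈ K := hKclosed.csSup_mem hKne hKbdd
  have hs0le : s0 ≤ t := hs0mem.1.2
  have hs0nonneg : 0 ≤ s0 := hs0mem.1.1
  have hfs0 : 0 ≤ f s0 := hs0mem.2
  -- on (s0, t], f is negative
  have hlt : ∀ s ∈ Set.Ioc s0 t, f s < 0 := by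
    intro s hs
    by_contra hpos'
    push_neg at hpos'
    have : s ∈ K := ⟨⟨le_trans hs0nonneg hs.1.le, hs.2⟩, hpos'⟩
    exact absurd (le_csSup hKbdd this) (not_le.mpr hs.1)
  have hmono : MonotoneOn f (Set.Icc s0 t) := by
    apply monotoneOn_of_deriv_nonneg (convex_Icc s0 t) (hcont.continuousOn)
    · intro s hs
      exact (hf s).differentiableAt.differentiableWithinAt
    · intro s hs
      rw [interior_Icc] at hs
      have hfs : f s ≤ 0 := (hlt s ⟨hs.1, hs.2.le⟩).le
      rw [(hf s).deriv]
      exact hg s hfs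
  have : f s0 ≤ f t := hmono ⟨le_refl _, hs0le⟩ ⟨hs0le, le_refl _⟩ hs0le
  linarith

/-- Nonnegativity of water depth: if outflow ceases when the depth is nonpositive
(`hᵢ ≤ 0 → A(h)ᵢⱼ ≥ 0`), then solutions starting in the nonnegative orthant stay
nonnegative for all `t ≥ 0`. -/
theorem stmt_1 {n : ℕ} (A : (Fin n → ℝ) → Matrix (Fin n) (Fin n) ℝ)
    (hbdd : ∃ C : ℝ, ∀ h i j, |A h i j| ≤ C)
    (hlip : ∀ i j, LocallyLipschitz (fun h => A h i j))
    (hpos : ∀ (h : Fin n → ℝ) (i : Fin n), h i ≤ 0 → ∀ j, 0 ≤ A h i j)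
    (S : Fin n → ℝ) (hS : ∀ i, 0 < S i)
    (h : ℝ → Fin n → ℝ)
    (hode : ∀ t i, HasDerivAt (fun s => h s i) ((∑ j, A (h t) i j) / S i) t)
    (h0 : ∀ i, 0 ≤ h 0 i) :
    ∀ t : ℝ, 0 ≤ t → ∀ i, 0 ≤ h t i := by
  intro t ht i
  refine nonneg_of_deriv_nonneg_on_nonpos (fun s => h s i)
    (fun s => (∑ j, A (h s) i j) / S i) (fun s => hode s i) ?_ (h0 i) t ht
  intro s hs
  apply div_nonneg _ (hS i).le
  exact Finset.sum_nonneg fun j _ => hpos (h s) i hs j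
end

section
/- Let z, S : Fin n → ℝ with Sᵢ > 0, and let A : ℝⁿ → Matrix (Fin n) (Fin n) ℝ satisfy A(h) = −A(h)ᵀ. Define Hᵢ = zᵢ + hᵢ and W(h) = ρg ∑ᵢ Sᵢ (zᵢhᵢ + hᵢ²/2) with ρg > 0. If h solves dhᵢ/dt = (∑ⱼ A(h)ᵢⱼ)/Sᵢ and for all i,j: A(h)ᵢⱼ ≤ 0 implies Hᵢ ≥ Hⱼ, then d/dt W(h(t)) ≤ 0. -/
/-!
`dW/dt = ρg ∑ᵢ Hᵢ ∑ⱼ Aᵢⱼ`, since `∂W/∂hᵢ = ρg Sᵢ Hᵢ`. By antisymmetry of `A` this double sum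
equals `½ ∑ᵢⱼ (Hᵢ - Hⱼ) Aᵢⱼ`, and each term is `≤ 0`: if `Aᵢⱼ ≤ 0` then `Hᵢ ≥ Hⱼ`, while if
`Aᵢⱼ > 0` then `Aⱼᵢ < 0`, so `Hⱼ ≥ Hᵢ`.
-/

open Matrix

section FluxSign

variable {ι R : Type*} [CommRing R]

theorem two_mul_sum_mul_sum_eq_sum_sum_sub_mul [Fintype ι] {M : Matrix ι ι R} (hM : M = -Mᵀ)
    (H : ι → R) :
    2 * ∑ i, H i * ∑ j, M i j = ∑ i, ∑ j, (H i - H j) * M i j := by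
  have hswap : ∑ i, ∑ j, H j * M i j = -∑ i, ∑ j, H i * M i j := by
    rw [Finset.sum_comm, ← Finset.sum_neg_distrib]
    refine Finset.sum_congr rfl fun i _ => ?_
    rw [← Finset.sum_neg_distrib]
    refine Finset.sum_congr rfl fun j _ => ?_
    rw [show M j i = -M i j by simpa using congr_fun₂ hM j i, mul_neg]
  calc 2 * ∑ i, H i * ∑ j, M i j = ∑ i, ∑ j, H i * M i j - ∑ i, ∑ j, H j * M i j := by
        rw [hswap, sub_neg_eq_add, ← two_mul]
        simp only [Finset.mul_sum]
    _ = ∑ i, ∑ j, (H i - H j) * M i j := by simp only [sub_mul, Finset.sum_sub_distrib]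

variable [LinearOrder R] [IsStrictOrderedRing R]

theorem sub_mul_nonpos_of_flow {M : Matrix ι ι R} (hM : M = -Mᵀ) {H : ι → R}
    (hflow : ∀ i j, M i j ≤ 0 → H j ≤ H i) (i j : ι) : (H i - H j) * M i j ≤ 0 := by
  rcases le_or_gt (M i j) 0 with hij | hij
  · exact mul_nonpos_of_nonneg_of_nonpos (sub_nonneg.2 (hflow i j hij)) hij
  · have hji : M j i ≤ 0 := by
      simpa using (congr_fun₂ hM j i).trans_le (neg_nonpos.2 hij.le)
    exact mul_nonpos_of_nonpos_of_nonneg (sub_nonpos.2 (hflow j i hji)) hij.le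

theorem sum_mul_sum_nonpos_of_flow [Fintype ι] {M : Matrix ι ι R} (hM : M = -Mᵀ) {H : ι → R}
    (hflow : ∀ i j, M i j ≤ 0 → H j ≤ H i) : ∑ i, H i * ∑ j, M i j ≤ 0 := by
  have h2 : 2 * ∑ i, H i * ∑ j, M i j ≤ 0 := by
    rw [two_mul_sum_mul_sum_eq_sum_sum_sub_mul hM]
    exact Finset.sum_nonpos fun i _ => Finset.sum_nonpos fun j _ =>
      sub_mul_nonpos_of_flow hM hflow i j
  exact nonpos_of_mul_nonpos_right h2 two_pos

end FluxSign

section PotentialEnergy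

variable {ι : Type*} [Fintype ι]

noncomputable def potentialEnergy (ρg : ℝ) (z S x : ι → ℝ) : ℝ :=
  ρg * ∑ i, S i * (z i * x i + x i ^ 2 / 2)

theorem hasDerivAt_potentialEnergy (ρg : ℝ) (z S : ι → ℝ) {h : ℝ → ι → ℝ} {h' : ι → ℝ}
    {t : ℝ} (hh : ∀ i, HasDerivAt (fun s => h s i) (h' i) t) :
    HasDerivAt (fun s => potentialEnergy ρg z S (h s))
      (ρg * ∑ i, S i * ((z i + h t i) * h' i)) t := by
  refine HasDerivAt.const_mul ρg (HasDerivAt.fun_sum fun i _ => ?_)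
  refine ((((hh i).const_mul (z i)).fun_add (((hh i).fun_pow 2).div_const 2)).const_mul
    (S i)).congr_deriv ?_
  push_cast
  ring

end PotentialEnergy

/-- Non-increase of total gravitational potential energy
`W(h) = ρg ∑ᵢ Sᵢ (zᵢhᵢ + hᵢ²/2)` along solutions, provided water only flows
from higher (or equal) water level to lower: `A(h)ᵢⱼ ≤ 0 → Hᵢ ≥ Hⱼ`. -/
theorem stmt_2 {n : ℕ} (z S : Fin n → ℝ) (hS : ∀ i, 0 < S i)
    (A : (Fin n → ℝ) → Matrix (Fin n) (Fin n) ℝ)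
    (hanti : ∀ h, A h = -(A h)ᵀ)
    (ρg : ℝ) (hρg : 0 < ρg)
    (h : ℝ → Fin n → ℝ)
    (hode : ∀ t i, HasDerivAt (fun s => h s i) ((∑ j, A (h t) i j) / S i) t)
    (hlevel : ∀ t i j, A (h t) i j ≤ 0 → z i + h t i ≥ z j + h t j) :
    ∀ (t : ℝ) (w : ℝ),
      HasDerivAt (fun s => ρg * ∑ i, S i * (z i * h s i + (h s i) ^ 2 / 2)) w t →
      w ≤ 0 := by
  intro t w hw
  rw [hw.unique (hasDerivAt_potentialEnergy ρg z S (hode t))]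
  have hcancel : ∀ i, S i * ((z i + h t i) * ((∑ j, A (h t) i j) / S i))
      = (z i + h t i) * ∑ j, A (h t) i j := fun i => by
    field_simp [(hS i).ne']
  simp only [hcancel]
  exact mul_nonpos_of_nonneg_of_nonpos hρg.le
    (sum_mul_sum_nonpos_of_flow (hanti (h t)) (hlevel t))
end

section
/- Let A : ℝⁿ → Matrix (Fin n) (Fin n) ℝ satisfy: (a) A(h) = −A(h)ᵀ; (c) Hᵢ > Hⱼ and hᵢ ≤ 0 implies A(h)ᵢⱼ = 0; (d) Hᵢ > Hⱼ and hᵢ > 0 implies A(h)ᵢⱼ < 0; (e) Hᵢ = Hⱼ implies A(h)ᵢⱼ = 0, where Hᵢ = zᵢ + hᵢ. Then for any h with h ≥ 0, the dissipation ρg ∑ᵢⱼ Hᵢ A(h)ᵢⱼ equals zero if and only if for every pair (i,j), either hᵢ = 0 or Hᵢ ≤ Hⱼ or Hᵢ = Hⱼ (i.e., h lies in the set S = {h : Hᵢ ≥ Hⱼ implies hᵢ = 0 or Hᵢ = Hⱼ}). -/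
open Matrix

/-- Equilibrium characterization: under conditions (a),(c),(d),(e) on the rules matrix,
for nonnegative `h` the dissipation `ρg ∑ᵢⱼ Hᵢ A(h)ᵢⱼ` vanishes iff `h` lies in the
pooled-water set `S = {h : Hᵢ ≥ Hⱼ → hᵢ = 0 ∨ Hᵢ = Hⱼ}`. -/
theorem stmt_4 {n : ℕ} (z : Fin n → ℝ)
    (A : (Fin n → ℝ) → Matrix (Fin n) (Fin n) ℝ)
    (ha : ∀ h, A h = -(A h)ᵀ)
    (hc : ∀ (h : Fin n → ℝ) i j, z i + h i > z j + h j → h i ≤ 0 → A h i j = 0)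
    (hd : ∀ (h : Fin n → ℝ) i j, z i + h i > z j + h j → h i > 0 → A h i j < 0)
    (he : ∀ (h : Fin n → ℝ) i j, z i + h i = z j + h j → A h i j = 0)
    (ρg : ℝ) (hρg : 0 < ρg)
    (h : Fin n → ℝ) (hpos : ∀ i, 0 ≤ h i) :
    (ρg * ∑ i, ∑ j, (z i + h i) * A h i j = 0) ↔
      (∀ i j, z i + h i ≥ z j + h j → h i = 0 ∨ z i + h i = z j + h j) := by
  have hskew : ∀ i j, A h j i = -(A h i j) := by
    intro i j
    have := congrFun (congrFun (ha h) j) i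
    simpa [Matrix.transpose_apply] using this
  set H : Fin n → ℝ := fun i => z i + h i with hH
  set g : Fin n → Fin n → ℝ := fun i j => (H i - H j) * A h i j with hg
  -- each g i j ≤ 0
  have hgle : ∀ i j, g i j ≤ 0 := by
    intro i j
    rcases lt_trichotomy (H i) (H j) with hlt | heq | hgt
    · have hAji : A h j i ≤ 0 := by
        rcases lt_or_ge 0 (h j) with hj | hj
        · exact (hd h j i hlt hj).le
        · exact (hc h j i hlt hj).le
      have hAij : 0 ≤ A h i j := by
        have := hskew i j; nlinarith
      have : H i - H j ≤ 0 := by linarith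
      exact mul_nonpos_of_nonpos_of_nonneg this hAij
    · simp [hg, heq]
    · have hAij : A h i j ≤ 0 := by
        rcases lt_or_ge 0 (h i) with hi | hi
        · exact (hd h i j hgt hi).le
        · exact (hc h i j hgt hi).le
      have : 0 ≤ H i - H j := by linarith
      exact mul_nonpos_of_nonneg_of_nonpos this hAij
  -- sum identity: ∑∑ g = 2 * ∑∑ H i * A h i j
  have hsum : ∑ i, ∑ j, g i j = 2 * ∑ i, ∑ j, H i * A h i j := by
    have h1 : ∑ i, ∑ j, H j * A h i j = -∑ i, ∑ j, H i * A h i j := by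
      rw [Finset.sum_comm]
      rw [← Finset.sum_neg_distrib]
      refine Finset.sum_congr rfl fun j _ => ?_
      rw [← Finset.sum_neg_distrib]
      refine Finset.sum_congr rfl fun i _ => ?_
      rw [hskew j i]; ring
    calc ∑ i, ∑ j, g i j
        = ∑ i, ∑ j, (H i * A h i j - H j * A h i j) := by
          refine Finset.sum_congr rfl fun i _ => Finset.sum_congr rfl fun j _ => ?_
          simp [hg]; ring
      _ = (∑ i, ∑ j, H i * A h i j) - ∑ i, ∑ j, H j * A h i j := by
          rw [← Finset.sum_sub_distrib]
          refine Finset.sum_congr rfl fun i _ => ?_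
          rw [Finset.sum_sub_distrib]
      _ = 2 * ∑ i, ∑ j, H i * A h i j := by rw [h1]; ring
  constructor
  · intro h0 i j hij
    by_contra hcon
    push_neg at hcon
    obtain ⟨hi0, hne⟩ := hcon
    have hgt : H i > H j := lt_of_le_of_ne hij (by simpa [hH, eq_comm] using hne)
    have hipos : 0 < h i := lt_of_le_of_ne (hpos i) (Ne.symm hi0)
    have hAij : A h i j < 0 := hd h i j hgt hipos
    -- ∑∑ g = 0
    have hS : ∑ i, ∑ j, H i * A h i j = 0 := by
      rcases mul_eq_zero.mp h0 with h' | h'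
      · exact absurd h' hρg.ne'
      · exact h'
    have hG : ∑ i, ∑ j, g i j = 0 := by rw [hsum, hS]; ring
    have hall : ∀ k ∈ Finset.univ, ∀ l ∈ Finset.univ, g k l = 0 := by
      have h1 : ∀ k ∈ (Finset.univ : Finset (Fin n)), ∑ l, g k l ≤ 0 := fun k _ =>
        Finset.sum_nonpos (fun l _ => hgle k l)
      have h2 := (Finset.sum_eq_zero_iff_of_nonpos h1).mp hG
      intro k hk l hl
      exact (Finset.sum_eq_zero_iff_of_nonpos (fun l _ => hgle k l)).mp (h2 k hk) l hl
    have := hall i (Finset.mem_univ i) j (Finset.mem_univ j)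
    have : (H i - H j) * A h i j = 0 := this
    nlinarith
  · intro hS
    have hA0 : ∀ i j, A h i j = 0 := by
      intro i j
      rcases lt_trichotomy (H i) (H j) with hlt | heq | hgt
      · have : A h j i = 0 := by
          rcases hS j i hlt.le with hj0 | hje
          · exact hc h j i hlt (le_of_eq hj0)
          · exact he h j i hje
        have := hskew i j; linarith [hskew i j, this]
      · exact he h i j heq
      · rcases hS i j hgt.le with hi0 | hie
        · exact hc h i j hgt (le_of_eq hi0)
        · exact he h i j hie
    have : ∑ i, ∑ j, H i * A h i j = 0 := by
      refine Finset.sum_eq_zero fun i _ => Finset.sum_eq_zero fun j _ => ?_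
      rw [hA0]; ring
    rw [this]; ring
end

section
/- Let hᵏ ∈ ℝⁿ with hᵢᵏ ≥ 0, let A⁻ be a matrix with aᵢⱼ⁻ ≤ 0 for i ≠ j and aᵢⱼ⁻ = 0 whenever hᵢᵏ = 0, and Sᵢ > 0, φ(τ) > 0. Define Uᵢⱼ = (aᵢⱼ⁻/Sᵢ)/(hᵢᵏ − φ(τ)(∑ⱼ aᵢⱼ⁻)/Sᵢ) (set to 0 when the denominator would be evaluated at hᵢᵏ=0 since numerator is 0) and Gᵢⱼ = Uᵢⱼ hᵢᵏ. Then the update hᵢᵏ⁺¹ = hᵢᵏ + φ(τ)((G − Gᵀ)·1)ᵢ satisfies hᵢᵏ⁺¹ ≥ 0 for all i. -/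
open Matrix

/-- Positivity of the conservative upwind-split NSFD scheme: with the limited outflow
matrix `Gᵢⱼ = Uᵢⱼ hᵢᵏ`, `Uᵢⱼ = (aᵢⱼ⁻/Sᵢ)/(hᵢᵏ − φ(τ)(∑ⱼ aᵢⱼ⁻)/Sᵢ)`, the update
`hᵢᵏ⁺¹ = hᵢᵏ + φ(τ)((G − Gᵀ)·1)ᵢ` stays nonnegative.
(In Lean, `0/0 = 0`, which realizes the convention that `Uᵢⱼ = 0` when `hᵢᵏ = 0`
forces the numerator to vanish.) -/
theorem stmt_9 {n : ℕ} (h : Fin n → ℝ) (hh : ∀ i, 0 ≤ h i)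
    (A : Matrix (Fin n) (Fin n) ℝ)
    (hA : ∀ i j, A i j ≤ 0)
    (hA0 : ∀ i, h i = 0 → ∀ j, A i j = 0)
    (S : Fin n → ℝ) (hS : ∀ i, 0 < S i) (φ : ℝ) (hφ : 0 < φ) :
    ∀ i, 0 ≤ h i + φ *
      ((Matrix.of (fun i j => (A i j / S i) / (h i - φ * (∑ k, A i k) / S i) * h i)
        - (Matrix.of (fun i j => (A i j / S i) / (h i - φ * (∑ k, A i k) / S i) * h i))ᵀ
        ).mulVec (fun _ => (1 : ℝ))) i := by
  intro i
  set G : Matrix (Fin n) (Fin n) ℝ :=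
    Matrix.of (fun i j => (A i j / S i) / (h i - φ * (∑ k, A i k) / S i) * h i) with hG
  have hGnonpos : ∀ a b, G a b ≤ 0 := by
    intro a b
    have hD : 0 ≤ h a - φ * (∑ k, A a k) / S a := by
      have hc : (∑ k, A a k) ≤ 0 := Finset.sum_nonpos fun k _ => hA a k
      have : 0 ≤ -(φ * (∑ k, A a k) / S a) := by
        rw [neg_nonneg]
        exact div_nonpos_of_nonpos_of_nonneg (mul_nonpos_of_nonneg_of_nonpos hφ.le hc) (hS a).le
      linarith [hh a]
    simp only [hG, Matrix.of_apply]
    apply mul_nonpos_of_nonpos_of_nonneg _ (hh a)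
    exact div_nonpos_of_nonpos_of_nonneg
      (div_nonpos_of_nonpos_of_nonneg (hA a b) (hS a).le) hD
  have hmv : ((G - Gᵀ).mulVec (fun _ => (1 : ℝ))) i
      = (∑ j, G i j) - (∑ j, G j i) := by
    simp [Matrix.mulVec, dotProduct, Matrix.sub_apply, Matrix.transpose_apply,
      Finset.sum_sub_distrib]
  rw [hmv]
  have hin : 0 ≤ -(∑ j, G j i) := by
    rw [neg_nonneg]
    exact Finset.sum_nonpos fun j _ => hGnonpos j i
  have hout : 0 ≤ h i + φ * (∑ j, G i j) := by
    have hsum : (∑ j, G i j) = (∑ k, A i k) / S i / (h i - φ * (∑ k, A i k) / S i) * h i := by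
      simp only [hG, Matrix.of_apply]
      rw [← Finset.sum_mul, ← Finset.sum_div, ← Finset.sum_div]
    rw [hsum]
    rcases eq_or_lt_of_le (hh i) with h0 | hpos
    · have : (∑ k, A i k) = 0 := by
        simp [Finset.sum_eq_zero fun k _ => hA0 i h0.symm k]
      simp [← h0, this]
    · set c := (∑ k, A i k) with hc
      have hcle : c ≤ 0 := Finset.sum_nonpos fun k _ => hA i k
      have hD : 0 < h i - φ * c / S i := by
        have : 0 ≤ -(φ * c / S i) := by
          rw [neg_nonneg]
          exact div_nonpos_of_nonpos_of_nonneg (mul_nonpos_of_nonneg_of_nonpos hφ.le hcle) (hS i).le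
        nlinarith [mul_nonneg hφ.le hin]
      have hSne : S i ≠ 0 := (hS i).ne'
      have hDne : h i - φ * c / S i ≠ 0 := hD.ne'
      have key : h i + φ * (c / S i / (h i - φ * c / S i) * h i)
          = h i * (S i * h i) / (S i * (h i - φ * c / S i)) := by
        have hne : h i * S i - φ * c ≠ 0 := by
          have := mul_pos hD (hS i)
          intro hz; rw [sub_mul, div_mul_cancel₀ _ hSne] at this; nlinarith
        field_simp [hne]
        ring
      rw [key]
      exact (div_pos (mul_pos hpos (mul_pos (hS i) hpos)) (mul_pos (hS i) hD)).le
  nlinarith [mul_nonneg hφ.le hin]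
end

section
/- Let fᵢⱼ(hᵢ, hⱼ) = β·sign(Hᵢ − Hⱼ)·l·((hᵢ+hⱼ)/2)^{5/2}·|Hᵢ − Hⱼ|^{1/2}/(n_m √Δx) with β, l, n_m, Δx > 0, Hᵢ = zᵢ + hᵢ, and define aᵢⱼ = −fᵢⱼ for neighboring cells (0 otherwise). Then the matrix A satisfies all conditions of Theorem 1: A = −Aᵀ, entries bounded on bounded sets of h ≥ 0, aᵢⱼ = 0 when Hᵢ = Hⱼ, aᵢⱼ < 0 when Hᵢ > Hⱼ and hᵢ > 0 and hᵢ + hⱼ > 0, and aᵢⱼ = 0 when Hᵢ > Hⱼ and hᵢ = hⱼ = 0. -/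
lemma abs_sign_le_one' (x : ℝ) : |Real.sign x| ≤ 1 := by
  rw [Real.sign]
  split_ifs <;> norm_num


open Matrix

/-- The Manning-formula rules matrix
`aᵢⱼ = −β·sign(Hᵢ−Hⱼ)·l·((hᵢ+hⱼ)/2)^{5/2}·|Hᵢ−Hⱼ|^{1/2}/(n_m √Δx)` (for neighboring
cells, `0` otherwise) satisfies the conditions of Theorem 1: antisymmetry, boundedness
on bounded sets of nonnegative depths, vanishing at equal water levels, strict
negativity when `Hᵢ > Hⱼ`, `hᵢ > 0`, `hᵢ + hⱼ > 0`, and vanishing when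
`Hᵢ > Hⱼ` and `hᵢ = hⱼ = 0`. -/
theorem stmt_17 {m : ℕ} (G : SimpleGraph (Fin m)) [DecidableRel G.Adj]
    (z : Fin m → ℝ) (β l nm Δx : ℝ)
    (hβ : 0 < β) (hl : 0 < l) (hnm : 0 < nm) (hΔx : 0 < Δx)
    (f : (Fin m → ℝ) → Fin m → Fin m → ℝ)
    (hf : ∀ h i j, f h i j =
      β * Real.sign ((z i + h i) - (z j + h j)) * l *
        Real.rpow ((h i + h j) / 2) (5 / 2) *
        Real.rpow |(z i + h i) - (z j + h j)| (1 / 2) / (nm * Real.sqrt Δx))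
    (A : (Fin m → ℝ) → Matrix (Fin m) (Fin m) ℝ)
    (hA : ∀ h i j, A h i j = if G.Adj i j then -(f h i j) else 0) :
    (∀ h, (A h)ᵀ = -(A h)) ∧
    (∀ C : ℝ, ∃ M : ℝ, ∀ h : Fin m → ℝ, (∀ i, 0 ≤ h i) → (∀ i, h i ≤ C) →
      ∀ i j, |A h i j| ≤ M) ∧
    (∀ (h : Fin m → ℝ) i j, z i + h i = z j + h j → A h i j = 0) ∧
    (∀ (h : Fin m → ℝ) i j, z i + h i > z j + h j → 0 < h i → 0 < h i + h j →
      G.Adj i j → A h i j < 0) ∧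
    (∀ (h : Fin m → ℝ) i j, z i + h i > z j + h j → h i = 0 → h j = 0 →
      A h i j = 0) := by
  have hfanti : ∀ h i j, f h j i = -(f h i j) := by
    intro h i j
    rw [hf, hf]
    have e1 : (z j + h j) - (z i + h i) = -((z i + h i) - (z j + h j)) := by ring
    rw [e1, Real.sign_neg, abs_neg, add_comm (h j) (h i)]
    ring
  refine ⟨?_, ?_, ?_, ?_, ?_⟩
  · intro h
    ext i j
    simp only [Matrix.transpose_apply, Matrix.neg_apply, hA, G.adj_comm j i]
    split_ifs with hadj
    · rw [hfanti]
    · simp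
  · intro C
    set Z : ℝ := ∑ i, |z i| with hZ
    have hZ0 : 0 ≤ Z := Finset.sum_nonneg fun _ _ => abs_nonneg _
    set C' : ℝ := max C 0 with hC'
    have hC'0 : (0:ℝ) ≤ C' := le_max_right _ _
    refine ⟨β * 1 * l * C' ^ ((5:ℝ)/2) * (2*Z + 2*C') ^ ((1:ℝ)/2) / (nm * Real.sqrt Δx), ?_⟩
    intro h h0 hC i j
    have hM0 : (0:ℝ) ≤ β * 1 * l * C' ^ ((5:ℝ)/2) * (2*Z + 2*C') ^ ((1:ℝ)/2) / (nm * Real.sqrt Δx) := by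
      have h1 : (0:ℝ) ≤ C' ^ ((5:ℝ)/2) := Real.rpow_nonneg hC'0 _
      have h2 : (0:ℝ) ≤ (2*Z + 2*C') ^ ((1:ℝ)/2) := Real.rpow_nonneg (by linarith) _
      have h3 : (0:ℝ) < nm * Real.sqrt Δx := mul_pos hnm (Real.sqrt_pos.2 hΔx)
      positivity
    rw [hA]
    split_ifs with hadj
    · rw [abs_neg, hf]
      have hd : (0:ℝ) < nm * Real.sqrt Δx := mul_pos hnm (Real.sqrt_pos.2 hΔx)
      have ha : (0:ℝ) ≤ (h i + h j) / 2 := by have := h0 i; have := h0 j; linarith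
      have hb : (0:ℝ) ≤ Real.rpow ((h i + h j)/2) (5/2) := Real.rpow_nonneg ha _
      have hc : (0:ℝ) ≤ Real.rpow |(z i + h i) - (z j + h j)| (1/2) :=
        Real.rpow_nonneg (abs_nonneg _) _
      rw [abs_div, abs_mul, abs_mul, abs_mul, abs_mul, abs_of_pos hβ, abs_of_pos hl,
        abs_of_nonneg hb, abs_of_nonneg hc, abs_of_pos hd]
      have hiZ : |z i| ≤ Z := Finset.single_le_sum (f := fun i => |z i|)
        (fun _ _ => abs_nonneg _) (Finset.mem_univ i)
      have hjZ : |z j| ≤ Z := Finset.single_le_sum (f := fun i => |z i|)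
        (fun _ _ => abs_nonneg _) (Finset.mem_univ j)
      have hhi : h i ≤ C' := le_trans (hC i) (le_max_left _ _)
      have hhj : h j ≤ C' := le_trans (hC j) (le_max_left _ _)
      have h1 : Real.rpow ((h i + h j)/2) (5/2) ≤ C' ^ ((5:ℝ)/2) := by
        apply Real.rpow_le_rpow ha (by linarith) (by norm_num)
      have hD : |(z i + h i) - (z j + h j)| ≤ 2*Z + 2*C' := by
        calc |(z i + h i) - (z j + h j)| ≤ |z i + h i| + |z j + h j| := abs_sub _ _
          _ ≤ (|z i| + |h i|) + (|z j| + |h j|) := by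
              gcongr <;> exact abs_add_le _ _
          _ ≤ 2*Z + 2*C' := by
              rw [abs_of_nonneg (h0 i), abs_of_nonneg (h0 j)]; linarith
      have h2 : Real.rpow |(z i + h i) - (z j + h j)| (1/2) ≤ (2*Z + 2*C') ^ ((1:ℝ)/2) := by
        apply Real.rpow_le_rpow (abs_nonneg _) hD (by norm_num)
      gcongr <;> first
        | exact abs_sign_le_one' _
        | positivity
    · rwa [abs_zero]
  · intro h i j hij
    rw [hA, hf, sub_eq_zero_of_eq hij, Real.sign_zero]
    simp
  · intro h i j hij hhi hsum hadj
    rw [hA, if_pos hadj, hf]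
    have hs : Real.sign ((z i + h i) - (z j + h j)) = 1 :=
      Real.sign_of_pos (by linarith)
    have h1 : (0:ℝ) < Real.rpow ((h i + h j)/2) (5/2) :=
      Real.rpow_pos_of_pos (by linarith) _
    have h2 : (0:ℝ) < Real.rpow |(z i + h i) - (z j + h j)| (1/2) := by
      apply Real.rpow_pos_of_pos
      rw [abs_pos]
      intro he
      linarith [sub_eq_zero.mp he]
    have hd : (0:ℝ) < nm * Real.sqrt Δx := mul_pos hnm (Real.sqrt_pos.2 hΔx)
    rw [hs]
    have : 0 < β * 1 * l * Real.rpow ((h i + h j)/2) (5/2) *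
        Real.rpow |(z i + h i) - (z j + h j)| (1/2) / (nm * Real.sqrt Δx) := by
      positivity
    linarith
  · intro h i j hij hhi hhj
    rw [hA, hf, hhi, hhj]
    have e : Real.rpow (((0:ℝ) + 0) / 2) (5 / 2) = 0 := by
      rw [show ((0:ℝ) + 0) / 2 = 0 by norm_num]
      exact Real.zero_rpow (by norm_num)
    rw [e]
    simp
end
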